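/- arXiv:2209.01812 — 8 statements merged into one kernel-verified Lean document; each statement's English description precedes it below -/
import Mathlib

section
/- Let h : ℝⁿ → ℝ be convex and absolutely homogeneous, t ∈ ℝ, w ∈ ℝⁿ, and let z minimize y ↦ |t|·h(y) + (1/2)·‖y − w‖². Then the exact equality ⟨w − z, z⟩ = |t| · h(z) holds. -/
open RealInnerProductSpace

/-- Tightness of the global inequality: for convex, absolutely homogeneous `h`,
if `z = prox_{|t| h}(w)` then `⟨w − z, z⟩ = |t|·h(z)`. -/
theorem prox_tight_equality {n : ℕ} (h : EuclideanSpace ℝ (Fin n) → ℝ)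
    (hconv : ConvexOn ℝ Set.univ h)
    (hhom : ∀ (α : ℝ) (x : EuclideanSpace ℝ (Fin n)), h (α • x) = |α| * h x)
    (t : ℝ) (w z : EuclideanSpace ℝ (Fin n))
    (hz : ∀ y, |t| * h z + (1/2) * ‖z - w‖^2 ≤ |t| * h y + (1/2) * ‖y - w‖^2) :
    ⟪w - z, z⟫ = |t| * h z := by
  set c : ℝ := |t| * h z + ⟪z - w, z⟫ with hc
  have hinner : ⟪w - z, z⟫ = -⟪z - w, z⟫ := by
    rw [← inner_neg_left]; congr 1; abel
  have key : ∀ ε : ℝ, 0 < ε → ε < 1 → |c| ≤ ε / 2 * ‖z‖ ^ 2 := by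
    intro ε hε hε1
    have expand : ∀ s : ℝ, ‖(1 + s) • z - w‖ ^ 2 =
        ‖z - w‖ ^ 2 + 2 * (s * ⟪z - w, z⟫) + s ^ 2 * ‖z‖ ^ 2 := by
      intro s
      have heq : (1 + s) • z - w = (z - w) + s • z := by module
      rw [heq, @norm_add_sq_real, real_inner_smul_right, norm_smul, Real.norm_eq_abs,
        mul_pow, sq_abs]
    have h1 : -c ≤ ε / 2 * ‖z‖ ^ 2 := by
      have := hz ((1 + ε) • z)
      rw [hhom, expand, abs_of_pos (show (0:ℝ) < 1 + ε by linarith)] at this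
      nlinarith [this]
    have h2 : c ≤ ε / 2 * ‖z‖ ^ 2 := by
      have := hz ((1 + (-ε)) • z)
      rw [hhom, expand, abs_of_pos (show (0:ℝ) < 1 + -ε by linarith)] at this
      nlinarith [this]
    rw [abs_le]; constructor <;> linarith
  have hzsq : (0:ℝ) ≤ ‖z‖ ^ 2 := sq_nonneg _
  have hc0 : c = 0 := by
    by_contra hne
    have habs : 0 < |c| := abs_pos.mpr hne
    rcases eq_or_lt_of_le hzsq with hzz | hzz
    · have := key (1/2) (by norm_num) (by norm_num)
      rw [← hzz] at this; simp at this; exact hne this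
    · set ε : ℝ := min (1/2) (|c| / ‖z‖ ^ 2) with hε
      have hεpos : 0 < ε := lt_min (by norm_num) (div_pos habs hzz)
      have hε1 : ε < 1 := lt_of_le_of_lt (min_le_left _ _) (by norm_num)
      have := key ε hεpos hε1
      have h2 : ε ≤ |c| / ‖z‖ ^ 2 := min_le_right _ _
      have h3 : ε * ‖z‖ ^ 2 ≤ |c| := by
        rw [← div_mul_cancel₀ |c| (ne_of_gt hzz)]
        exact mul_le_mul_of_nonneg_right h2 hzsq
      nlinarith
  rw [hinner]
  have : ⟪z - w, z⟫ = c - |t| * h z := by rw [hc]; ring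
  rw [this, hc0]; ring
end

section
/- Let h : ℝⁿ → ℝ be convex and absolutely homogeneous, let x ∈ ℝⁿ with ‖x‖ = 1 and G ∈ ℝⁿ with ⟨x, G⟩ = 0, let t' ∈ ℝ, and let z minimize y ↦ |t'|·h(y) + (1/2)·‖y − (x − t' • G)‖². Then c(t') = ⟨x, z⟩ ≥ 1 − |t'| · h(x). -/
open RealInnerProductSpace

/-- Lower bound on `c(t') = ⟨x, z(t')⟩` for convex, absolutely homogeneous `h`:
with `z = prox_{|t'| h}(x − t' • G)`, one has `⟨x, z⟩ ≥ 1 − |t'|·h(x)`. -/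
theorem c_lower_bound {n : ℕ} (h : EuclideanSpace ℝ (Fin n) → ℝ)
    (hconv : ConvexOn ℝ Set.univ h)
    (hhom : ∀ (α : ℝ) (x : EuclideanSpace ℝ (Fin n)), h (α • x) = |α| * h x)
    (x G : EuclideanSpace ℝ (Fin n)) (hx : ‖x‖ = 1) (hxG : ⟪x, G⟫ = 0)
    (t' : ℝ) (z : EuclideanSpace ℝ (Fin n))
    (hz : ∀ y, |t'| * h z + (1/2) * ‖z - (x - t' • G)‖^2 ≤
      |t'| * h y + (1/2) * ‖y - (x - t' • G)‖^2) :
    1 - |t'| * h x ≤ ⟪x, z⟫ := by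
  by_contra hc
  push_neg at hc
  obtain ⟨A, hA⟩ : ∃ A : ℝ, A = |t'| * h x + ⟪x, z⟫ - 1 := ⟨_, rfl⟩
  have hAneg : A < 0 := by rw [hA]; linarith
  obtain ⟨s, hs⟩ : ∃ s : ℝ, s = -A := ⟨_, rfl⟩
  have hspos : 0 < s := by rw [hs]; linarith
  -- subadditivity bound
  have hsub : h (z + s • x) ≤ h z + s * h x := by
    have h2 := hconv.2 (Set.mem_univ z) (Set.mem_univ (s • x))
      (by norm_num : (0:ℝ) ≤ 1/2) (by norm_num : (0:ℝ) ≤ 1/2) (by norm_num)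
    have hh : h ((1/2 : ℝ) • (z + s • x)) = (1/2) * h (z + s • x) := by
      rw [hhom]; norm_num
    have hsx : h ((1/2 : ℝ) • (s • x)) = (1/2) * h (s • x) := by
      rw [hhom]; norm_num
    have hsx2 : h (s • x) = s * h x := by rw [hhom, abs_of_pos hspos]
    have hzz : h ((1/2 : ℝ) • z) = (1/2) * h z := by rw [hhom]; norm_num
    have hsum : (1/2 : ℝ) • z + (1/2 : ℝ) • (s • x) = (1/2 : ℝ) • (z + s • x) := by
      rw [smul_add]
    rw [hsum, hh, hsx2] at h2
    simp only [smul_eq_mul] at h2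
    linarith
  -- norm expansion
  have hix : ⟪x, x⟫ = (1 : ℝ) := by
    rw [real_inner_self_eq_norm_sq, hx]; norm_num
  have hiGx : ⟪G, x⟫ = (0 : ℝ) := by rw [real_inner_comm]; exact hxG
  have hnorm : ‖(z + s • x) - (x - t' • G)‖^2
      = ‖z - (x - t' • G)‖^2 + 2*s*(⟪x, z⟫ - 1) + s^2 := by
    have heq : (z + s • x) - (x - t' • G) = (z - (x - t' • G)) + s • x := by
      abel
    rw [heq, norm_add_sq_real]
    have hinner : ⟪z - (x - t' • G), s • x⟫ = s * (⟪x, z⟫ - 1) := by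
      rw [real_inner_smul_right, inner_sub_left, inner_sub_left,
        real_inner_smul_left, hix, hiGx, real_inner_comm z x]
      ring
    rw [hinner, norm_smul, hx]
    simp [abs_of_pos hspos]
    ring
  have key := hz (z + s • x)
  rw [hnorm] at key
  have hmul : |t'| * h (z + s • x) ≤ |t'| * h z + |t'| * (s * h x) := by
    nlinarith [abs_nonneg t', hsub]
  -- 0 ≤ |t'| * s * h x + s*(⟪x,z⟫ - 1) + s^2/2 = s*A + s^2/2 = -s^2 + s^2/2 < 0
  have hfin : (0:ℝ) ≤ |t'| * (s * h x) + s * (⟪x, z⟫ - 1) + s^2/2 := by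
    linarith
  have : |t'| * (s * h x) + s * (⟪x, z⟫ - 1) = s * A := by
    rw [hA]; ring
  nlinarith [sq_nonneg s, hspos]
end

section
/- Let h : ℝⁿ → ℝ be convex and absolutely homogeneous, x ∈ ℝⁿ with ‖x‖ = 1, and G ∈ ℝⁿ with ⟨x, G⟩ = 0. For each t' with |t'| · h(x) < 1, letting z(t') minimize y ↦ |t'|·h(y) + (1/2)·‖y − (x − t' • G)‖², one has c(t') = ⟨x, z(t')⟩ > 0, so φ(t') = t'/c(t') is well defined; moreover φ is monotonically increasing on this interval, i.e. for all nonzero t'₁ ≠ t'₂ with |t'₁|·h(x) < 1 and |t'₂|·h(x) < 1, (φ(t'₁) − φ(t'₂))·(t'₁ − t'₂) ≥ 0, and φ(0) = 0 (since z(0) = x and hence c(0) = 1). -/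
/-!
Write `w = x - t • G` and `s = |t|`. By first-order optimality, `r = w - z(t)` is `s` times a
subgradient of the seminorm `h` at `z(t)`, i.e. `⟪r, y⟫ ≤ s h(y)` for all `y` with equality at
`y = z(t)`. Testing at `y = x` gives `1 - c(t) ≤ s h(x) < 1`, so `c(t) > 0`. For two step sizes
`s₁, s₂` of the same sign, monotonicity of the subdifferential applied to
`D = s₁ r₂ - s₂ r₁` gives `‖D‖² ≤ (s₁ - s₂) ⟪D, x⟫` (the `G`-terms cancel), and by Cauchy–Schwarz
`u = ⟪D, x⟫` lies between `0` and `s₁ - s₂`. Since `s₁ c₂ - s₂ c₁ = s₁ - s₂ - u`, this is the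
monotonicity of `s / c(s)`. For step sizes of opposite signs, `φ` has the sign of `t` because
`c > 0`.
-/

open RealInnerProductSpace Set Filter Topology

variable {E : Type*} [NormedAddCommGroup E]

def IsProxPoint (h : E → ℝ) (s : ℝ) (w z : E) : Prop :=
  ∀ y, s * h z + (1/2) * ‖z - w‖^2 ≤ s * h y + (1/2) * ‖y - w‖^2

namespace IsProxPoint

variable {h : E → ℝ} {s s₁ s₂ : ℝ} {w w₁ w₂ x z z₁ z₂ : E}

theorem eq_of_zero (hz : IsProxPoint h 0 w z) : z = w := by
  have hmin := hz w
  simp only [zero_mul, zero_add, sub_self, norm_zero] at hmin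
  have : ‖z - w‖ = 0 := by nlinarith [norm_nonneg (z - w)]
  rwa [norm_eq_zero, sub_eq_zero] at this

variable [InnerProductSpace ℝ E]

theorem inner_sub_le (hconv : ConvexOn ℝ univ h) (hs : 0 ≤ s) (hz : IsProxPoint h s w z)
    (y : E) : ⟪w - z, y - z⟫ ≤ s * (h y - h z) := by
  set a := s * (h y - h z) - ⟪w - z, y - z⟫
  have hsmall : ∀ θ ∈ Ioc (0 : ℝ) 1, 0 ≤ a + θ * (‖y - z‖ ^ 2 / 2) := by
    rintro θ ⟨hθ, hθ1⟩
    have hsegment : h (z + θ • (y - z)) ≤ h z + θ * (h y - h z) := by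
      have := hconv.2 (mem_univ z) (mem_univ y) (by linarith : 0 ≤ 1 - θ) hθ.le (by ring)
      rw [show z + θ • (y - z) = (1 - θ) • z + θ • y by module]
      simp only [smul_eq_mul] at this
      linarith
    have hexpand : ‖z + θ • (y - z) - w‖ ^ 2
        = ‖z - w‖ ^ 2 - 2 * θ * ⟪w - z, y - z⟫ + θ ^ 2 * ‖y - z‖ ^ 2 := by
      rw [show z + θ • (y - z) - w = (z - w) + θ • (y - z) by abel, norm_add_sq_real,
        real_inner_smul_right, norm_smul, Real.norm_eq_abs, mul_pow, sq_abs,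
        show z - w = -(w - z) by abel, inner_neg_left, norm_neg]
      ring
    have hmin := hz (z + θ • (y - z))
    rw [hexpand] at hmin
    refine nonneg_of_mul_nonneg_right ?_ hθ
    nlinarith [mul_le_mul_of_nonneg_left hsegment hs]
  have hlim : Tendsto (fun θ : ℝ => a + θ * (‖y - z‖ ^ 2 / 2)) (𝓝[>] 0) (𝓝 a) := by
    have : Continuous (fun θ : ℝ => a + θ * (‖y - z‖ ^ 2 / 2)) := by fun_prop
    simpa using (this.tendsto 0).mono_left nhdsWithin_le_nhds
  have := ge_of_tendsto hlim (eventually_of_mem (Ioc_mem_nhdsGT one_pos) hsmall)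
  linarith

variable (hconv : ConvexOn ℝ univ h) (hhom : ∀ α : ℝ, 0 ≤ α → ∀ y, h (α • y) = α * h y)
include hconv hhom

theorem inner_self_eq (hs : 0 ≤ s) (hz : IsProxPoint h s w z) : ⟪w - z, z⟫ = s * h z := by
  have hzero := hz.inner_sub_le hconv hs 0
  have htwice := hz.inner_sub_le hconv hs ((2 : ℝ) • z)
  have h0 : h 0 = 0 := by simpa using hhom 0 le_rfl 0
  rw [zero_sub, inner_neg_right, h0] at hzero
  rw [hhom 2 zero_le_two, show (2 : ℝ) • z - z = z by module] at htwice
  linarith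

theorem inner_le (hs : 0 ≤ s) (hz : IsProxPoint h s w z) (y : E) : ⟪w - z, y⟫ ≤ s * h y := by
  have := hz.inner_sub_le hconv hs y
  rw [inner_sub_right, hz.inner_self_eq hconv hhom hs] at this
  linarith

theorem inner_pos (hs : 0 ≤ s) (hz : IsProxPoint h s w z) (hxw : s * h x < ⟪x, w⟫) :
    0 < ⟪x, z⟫ := by
  have := hz.inner_le hconv hhom hs x
  rw [inner_sub_left, real_inner_comm x w, real_inner_comm x z] at this
  linarith

/-- With `rᵢ = wᵢ - zᵢ`, the vector `s₁ r₂ - s₂ r₁` is `s₁ s₂ (g₂ - g₁)` for subgradients `gᵢ`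
of `h` at `zᵢ`: this is one half of the monotonicity of `∂h`. -/
theorem inner_smul_sub_smul_nonpos (hs₁ : 0 ≤ s₁) (hs₂ : 0 ≤ s₂)
    (hz₁ : IsProxPoint h s₁ w₁ z₁) (hz₂ : IsProxPoint h s₂ w₂ z₂) :
    ⟪s₁ • (w₂ - z₂) - s₂ • (w₁ - z₁), z₁⟫ ≤ 0 := by
  rw [inner_sub_left, real_inner_smul_left, real_inner_smul_left,
    hz₁.inner_self_eq hconv hhom hs₁]
  nlinarith [mul_le_mul_of_nonneg_left (hz₂.inner_le hconv hhom hs₂ z₁) hs₁]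

theorem norm_sq_le_sub_mul_inner {G : E} (hs₁ : 0 ≤ s₁) (hs₂ : 0 ≤ s₂)
    (hz₁ : IsProxPoint h s₁ (x - s₁ • G) z₁) (hz₂ : IsProxPoint h s₂ (x - s₂ • G) z₂) :
    ‖s₁ • (x - s₂ • G - z₂) - s₂ • (x - s₁ • G - z₁)‖ ^ 2 ≤
      (s₁ - s₂) * ⟪s₁ • (x - s₂ • G - z₂) - s₂ • (x - s₁ • G - z₁), x⟫ := by
  set D := s₁ • (x - s₂ • G - z₂) - s₂ • (x - s₁ • G - z₁)
  have h₁ : ⟪D, z₁⟫ ≤ 0 := inner_smul_sub_smul_nonpos hconv hhom hs₁ hs₂ hz₁ hz₂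
  have h₂ : ⟪-D, z₂⟫ ≤ 0 := by
    simpa [D, neg_sub] using inner_smul_sub_smul_nonpos hconv hhom hs₂ hs₁ hz₂ hz₁
  have hcombo : s₁ • z₂ - s₂ • z₁ = (s₁ - s₂) • x - D := by simp only [D]; module
  have : 0 ≤ ⟪D, s₁ • z₂ - s₂ • z₁⟫ := by
    rw [inner_neg_left] at h₂
    rw [inner_sub_right, real_inner_smul_right, real_inner_smul_right]
    nlinarith
  rwa [hcombo, inner_sub_right, real_inner_smul_right, real_inner_self_eq_norm_sq,
    sub_nonneg] at this

theorem div_inner_sub_div_inner_mul_sub_nonneg {G : E} (hx : ‖x‖ = 1) (hxG : ⟪x, G⟫ = 0)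
    (hs₁ : 0 ≤ s₁) (hs₂ : 0 ≤ s₂)
    (hz₁ : IsProxPoint h s₁ (x - s₁ • G) z₁) (hz₂ : IsProxPoint h s₂ (x - s₂ • G) z₂)
    (hc₁ : 0 < ⟪x, z₁⟫) (hc₂ : 0 < ⟪x, z₂⟫) :
    0 ≤ (s₁ / ⟪x, z₁⟫ - s₂ / ⟪x, z₂⟫) * (s₁ - s₂) := by
  set D := s₁ • (x - s₂ • G - z₂) - s₂ • (x - s₁ • G - z₁)
  have hnorm := norm_sq_le_sub_mul_inner hconv hhom hs₁ hs₂ hz₁ hz₂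
  have hcs : ⟪D, x⟫ ^ 2 ≤ ‖D‖ ^ 2 := by
    have := abs_real_inner_le_norm D x
    rw [hx, mul_one] at this
    simpa only [sq_abs] using pow_le_pow_left₀ (abs_nonneg _) this 2
  have hxx : ⟪x, x⟫ = 1 := by rw [real_inner_self_eq_norm_sq, hx, one_pow]
  have hu : ⟪D, x⟫ = (s₁ - s₂) - (s₁ * ⟪x, z₂⟫ - s₂ * ⟪x, z₁⟫) := by
    rw [real_inner_comm]
    simp only [D, inner_sub_right, real_inner_smul_right, hxx, hxG]
    ring
  rw [div_sub_div _ _ hc₁.ne' hc₂.ne', div_mul_eq_mul_div]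
  refine div_nonneg ?_ (mul_pos hc₁ hc₂).le
  nlinarith [sq_nonneg (s₁ - s₂ - ⟪D, x⟫)]

end IsProxPoint

theorem div_sub_div_mul_sub_nonneg_of_mul_nonpos {t₁ t₂ c₁ c₂ : ℝ} (hc₁ : 0 < c₁)
    (hc₂ : 0 < c₂) (ht : t₁ * t₂ ≤ 0) : 0 ≤ (t₁ / c₁ - t₂ / c₂) * (t₁ - t₂) := by
  have hcross : 0 ≤ -(t₁ * t₂) * (c₁⁻¹ + c₂⁻¹) := mul_nonneg (neg_nonneg.2 ht) (by positivity)
  have : (t₁ / c₁ - t₂ / c₂) * (t₁ - t₂)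
      = t₁ ^ 2 / c₁ + t₂ ^ 2 / c₂ + -(t₁ * t₂) * (c₁⁻¹ + c₂⁻¹) := by ring
  rw [this]
  have := div_nonneg (sq_nonneg t₁) hc₁.le
  have := div_nonneg (sq_nonneg t₂) hc₂.le
  linarith

/-- The proxy step-size to actual step-size mapping `φ(t') = t'/c(t')`:
for `|t'|·h(x) < 1` one has `c(t') = ⟨x, z(t')⟩ > 0`; `φ` is monotonically
increasing on this interval; and `z(0) = x`, `c(0) = 1`, `φ(0) = 0`. -/
theorem phi_monotone_on_interval {n : ℕ} (h : EuclideanSpace ℝ (Fin n) → ℝ)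
    (hconv : ConvexOn ℝ Set.univ h)
    (hhom : ∀ (α : ℝ) (x : EuclideanSpace ℝ (Fin n)), h (α • x) = |α| * h x)
    (x G : EuclideanSpace ℝ (Fin n)) (hx : ‖x‖ = 1) (hxG : ⟪x, G⟫ = 0)
    (z : ℝ → EuclideanSpace ℝ (Fin n))
    (hz : ∀ t' : ℝ, |t'| * h x < 1 → ∀ y,
      |t'| * h (z t') + (1/2) * ‖z t' - (x - t' • G)‖^2 ≤
        |t'| * h y + (1/2) * ‖y - (x - t' • G)‖^2) :
    (∀ t' : ℝ, |t'| * h x < 1 → 0 < ⟪x, z t'⟫) ∧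
    (∀ t'₁ t'₂ : ℝ, t'₁ ≠ 0 → t'₂ ≠ 0 → t'₁ ≠ t'₂ →
      |t'₁| * h x < 1 → |t'₂| * h x < 1 →
      0 ≤ (t'₁ / ⟪x, z t'₁⟫ - t'₂ / ⟪x, z t'₂⟫) * (t'₁ - t'₂)) ∧
    z 0 = x ∧ ⟪x, z 0⟫ = 1 ∧ (0 : ℝ) / ⟪x, z 0⟫ = 0 := by
  have hprox : ∀ t, |t| * h x < 1 → IsProxPoint h |t| (x - t • G) (z t) := hz
  have hhom' : ∀ α : ℝ, 0 ≤ α → ∀ y, h (α • y) = α * h y := fun α hα y => by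
    rw [hhom, abs_of_nonneg hα]
  have hxx : ⟪x, x⟫ = 1 := by rw [real_inner_self_eq_norm_sq, hx, one_pow]
  have hpos : ∀ t : ℝ, |t| * h x < 1 → 0 < ⟪x, z t⟫ := fun t ht =>
    (hprox t ht).inner_pos hconv hhom' (abs_nonneg t) <| by
      rwa [inner_sub_right, real_inner_smul_right, hxG, hxx, mul_zero, sub_zero]
  have hz0 : z 0 = x := by
    have h0 := hprox 0 (by simp)
    rw [abs_zero, zero_smul, sub_zero] at h0
    exact h0.eq_of_zero
  refine ⟨hpos, fun t₁ t₂ _ _ _ h₁ h₂ => ?_, hz0, by rw [hz0, hxx], zero_div _⟩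
  rcases le_or_gt (t₁ * t₂) 0 with hmixed | hsame
  · exact div_sub_div_mul_sub_nonneg_of_mul_nonpos (hpos t₁ h₁) (hpos t₂ h₂) hmixed
  rcases pos_and_pos_or_neg_and_neg_of_mul_pos hsame with ⟨p₁, p₂⟩ | ⟨n₁, n₂⟩
  · have hz₁ := hprox t₁ h₁
    have hz₂ := hprox t₂ h₂
    rw [abs_of_pos p₁] at hz₁
    rw [abs_of_pos p₂] at hz₂
    exact hz₁.div_inner_sub_div_inner_mul_sub_nonneg hconv hhom' hx hxG p₁.le p₂.le hz₂
      (hpos t₁ h₁) (hpos t₂ h₂)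
  · -- for `t < 0`, `x - t • G = x - |t| • (-G)`
    have hz₁ := hprox t₁ h₁
    have hz₂ := hprox t₂ h₂
    rw [abs_of_neg n₁, ← neg_smul_neg] at hz₁
    rw [abs_of_neg n₂, ← neg_smul_neg] at hz₂
    have := hz₁.div_inner_sub_div_inner_mul_sub_nonneg hconv hhom' hx (by rwa [inner_neg_right,
      neg_eq_zero]) (neg_nonneg.2 n₁.le) (neg_nonneg.2 n₂.le) hz₂ (hpos t₁ h₁) (hpos t₂ h₂)
    linarith [show (-t₁ / ⟪x, z t₁⟫ - -t₂ / ⟪x, z t₂⟫) * (-t₁ - -t₂)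
      = (t₁ / ⟪x, z t₁⟫ - t₂ / ⟪x, z t₂⟫) * (t₁ - t₂) by ring]
end

section
/- Let h : ℝⁿ → ℝ be convex and absolutely homogeneous, x ∈ ℝⁿ with ‖x‖ = 1, G ∈ ℝⁿ with ⟨x, G⟩ = 0, and t' ≠ 0. Let z minimize y ↦ |t'|·h(y) + (1/2)·‖y − (x − t' • G)‖² and suppose c := ⟨x, z⟩ ≠ 0. Then the actual step-size t = t'/c satisfies |t| ≥ 1/√((1/t')² + ‖G‖²); in particular t ≠ 0 whenever ‖G‖ is finite. -/
/-!
Put `w = x - t' • G`. Because `h` is absolutely homogeneous, the prox point `z` is also optimal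
along its own ray `l ↦ l • z`, and the first-order condition at `l = 1` reads
`|t'| h(z) + ‖z‖² = ⟪z, w⟫`. A convex even function is minimal at `0`, so `h ≥ h 0 = 0` and
`‖z‖² ≤ ⟪z, w⟫ ≤ ‖z‖ ‖w‖`. Hence `|⟪x, z⟫| ≤ ‖z‖ ≤ ‖w‖`, and `‖w‖ = |t'| √((1/t')² + ‖G‖²)`
by Pythagoras.
-/

open RealInnerProductSpace

theorem ConvexOn.apply_zero_le_of_even {E : Type*} [AddCommGroup E] [Module ℝ E] {f : E → ℝ}
    (hf : ConvexOn ℝ Set.univ f) (heven : Function.Even f) (x : E) : f 0 ≤ f x := by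
  have hmid := hf.2 (Set.mem_univ x) (Set.mem_univ (-x)) (by norm_num : (0:ℝ) ≤ 1/2)
    (by norm_num : (0:ℝ) ≤ 1/2) (by norm_num)
  rw [show (1/2:ℝ) • x + (1/2:ℝ) • (-x) = 0 by module, heven, smul_eq_mul] at hmid
  linarith

section Prox

variable {E : Type*} [NormedAddCommGroup E] [InnerProductSpace ℝ E]

theorem add_norm_sq_eq_inner_of_isMinimizer {f : E → ℝ} {w z : E}
    (hhom : ∀ l : ℝ, 0 < l → f (l • z) = l * f z)
    (hz : ∀ y, f z + (1/2) * ‖z - w‖^2 ≤ f y + (1/2) * ‖y - w‖^2) :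
    f z + ‖z‖^2 = ⟪z, w⟫ := by
  let φ : ℝ → ℝ := fun l => l * f z + (1/2) * (l^2 * ‖z‖^2 - 2 * (l * ⟪z, w⟫) + ‖w‖^2)
  have hmin : IsLocalMin φ 1 := by
    filter_upwards [Ioi_mem_nhds one_pos] with l hl
    have hlz := hz (l • z)
    rw [hhom l hl, norm_sub_sq_real, norm_sub_sq_real, norm_smul, real_inner_smul_left,
      Real.norm_eq_abs, mul_pow, sq_abs] at hlz
    simp only [φ]
    linarith
  have hderiv : HasDerivAt φ (f z + ‖z‖^2 - ⟪z, w⟫) 1 := by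
    have hid := hasDerivAt_id (1:ℝ)
    have := (hid.mul_const (f z)).add <| HasDerivAt.const_mul (1/2) <|
      (((hid.pow 2).mul_const (‖z‖^2)).sub ((hid.mul_const ⟪z, w⟫).const_mul 2)).add_const (‖w‖^2)
    exact this.congr_deriv (by norm_num; ring)
  linarith [hmin.hasDerivAt_eq_zero hderiv]

theorem norm_le_norm_of_sq_le_inner {z w : E} (h : ‖z‖^2 ≤ ⟪z, w⟫) : ‖z‖ ≤ ‖w‖ := by
  nlinarith [real_inner_le_norm z w, norm_nonneg z, norm_nonneg w]

theorem norm_sub_smul_of_inner_eq_zero {x G : E} (hx : ‖x‖ = 1) (hxG : ⟪x, G⟫ = 0) {t : ℝ}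
    (ht : t ≠ 0) : ‖x - t • G‖ = |t| * Real.sqrt ((1/t)^2 + ‖G‖^2) := by
  have hpyth := norm_sub_sq_eq_norm_sq_add_norm_sq_real
    (by rw [real_inner_smul_right, hxG, mul_zero] : ⟪x, t • G⟫ = 0)
  rw [hx, norm_smul, Real.norm_eq_abs] at hpyth
  rw [← Real.sqrt_sq_eq_abs, ← Real.sqrt_mul (sq_nonneg t), ← Real.sqrt_sq (norm_nonneg _)]
  congr 1
  field_simp
  nlinarith [hpyth, sq_abs t]

end Prox

/-- Lower bound on the actual step-size: with `z = prox_{|t'| h}(x − t' • G)` and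
`c = ⟨x, z⟩ ≠ 0`, the actual step-size `t = t'/c` satisfies
`|t| ≥ 1/√((1/t')² + ‖G‖²)`; in particular `t ≠ 0`. -/
theorem actual_stepsize_lower_bound {n : ℕ} (h : EuclideanSpace ℝ (Fin n) → ℝ)
    (hconv : ConvexOn ℝ Set.univ h)
    (hhom : ∀ (α : ℝ) (x : EuclideanSpace ℝ (Fin n)), h (α • x) = |α| * h x)
    (x G : EuclideanSpace ℝ (Fin n)) (hx : ‖x‖ = 1) (hxG : ⟪x, G⟫ = 0)
    (t' : ℝ) (ht' : t' ≠ 0) (z : EuclideanSpace ℝ (Fin n))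
    (hz : ∀ y, |t'| * h z + (1/2) * ‖z - (x - t' • G)‖^2 ≤
      |t'| * h y + (1/2) * ‖y - (x - t' • G)‖^2)
    (hc : ⟪x, z⟫ ≠ 0) :
    1 / Real.sqrt ((1/t')^2 + ‖G‖^2) ≤ |t' / ⟪x, z⟫| ∧ t' / ⟪x, z⟫ ≠ 0 := by
  have hh_nonneg : 0 ≤ h z := by
    have h0 : h 0 = 0 := by simpa using hhom 0 0
    simpa [h0] using hconv.apply_zero_le_of_even (fun y => by simpa using hhom (-1) y) z
  have hprox := add_norm_sq_eq_inner_of_isMinimizer (f := fun y => |t'| * h y)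
    (fun l hl => by simp only [hhom, abs_of_pos hl]; ring) hz
  have hzw : ‖z‖ ≤ ‖x - t' • G‖ :=
    norm_le_norm_of_sq_le_inner (by nlinarith [abs_nonneg t'])
  have hxz : |⟪x, z⟫| ≤ ‖z‖ := by simpa [hx] using abs_real_inner_le_norm x z
  have hsqrt : 0 < Real.sqrt ((1/t')^2 + ‖G‖^2) := by positivity
  refine ⟨?_, div_ne_zero ht' hc⟩
  rw [abs_div, div_le_div_iff₀ hsqrt (abs_pos.mpr hc), one_mul,
    ← norm_sub_smul_of_inner_eq_zero hx hxG ht']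
  exact hxz.trans hzw
end

section
/- Let h : ℝⁿ → ℝ be convex and absolutely homogeneous, let x ∈ ℝⁿ with ‖x‖ = 1, v ∈ ℝⁿ with ⟨x, v⟩ = 0, G ∈ ℝⁿ, and t > 0. Suppose there exists ξ ∈ ℝⁿ which is a subgradient of h at x + v (i.e. h(y) ≥ h(x+v) + ⟨ξ, y − (x+v)⟩ for all y) such that G + (1/t) • v + (ξ − ⟨x, ξ⟩ • x) = 0 (the first-order condition of the tangent-space proximal subproblem, with ξ orthogonally projected onto T_x S). Then h((x + v)/‖x + v‖) ≤ h(x) + ⟨−G − (1/t) • v, v⟩. -/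
/-!
An absolutely homogeneous convex function is a seminorm, so it is nonnegative and shrinks
under scalars of modulus at most one. Since `v ⊥ x` and `‖x‖ = 1`, we have `‖x + v‖ ≥ 1`,
hence `h((x + v)/‖x + v‖) ≤ h(x + v)`. The subgradient inequality at `y = x` gives
`h(x + v) ≤ h(x) + ⟨ξ, v⟩`, and projecting `ξ` onto `T_x S` does not change `⟨ξ, v⟩`, so
the first-order condition identifies `⟨ξ, v⟩` with `⟨−G − (1/t) • v, v⟩`.
-/

open RealInnerProductSpace

section AbsolutelyHomogeneous

variable {E : Type*} [AddCommGroup E] [Module ℝ E] {h : E → ℝ}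

theorem nonneg_of_convexOn_of_abs_homogeneous (hconv : ConvexOn ℝ Set.univ h)
    (hhom : ∀ (α : ℝ) (x : E), h (α • x) = |α| * h x) (y : E) : 0 ≤ h y := by
  have h_zero : h 0 = 0 := by simpa using hhom 0 0
  have h_neg : h (-y) = h y := by simpa using hhom (-1) y
  have h_mid : h ((1 / 2 : ℝ) • y + (1 / 2 : ℝ) • -y) ≤ 1 / 2 * h y + 1 / 2 * h (-y) :=
    hconv.2 (Set.mem_univ y) (Set.mem_univ (-y)) (by norm_num) (by norm_num) (by norm_num)
  rw [smul_neg, add_neg_cancel, h_zero, h_neg] at h_mid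
  linarith

theorem apply_smul_le_of_abs_le_one (hhom : ∀ (α : ℝ) (x : E), h (α • x) = |α| * h x)
    (hnonneg : ∀ y, 0 ≤ h y) {c : ℝ} (hc : |c| ≤ 1) (y : E) : h (c • y) ≤ h y := by
  rw [hhom]
  exact mul_le_of_le_one_left (hnonneg y) hc

end AbsolutelyHomogeneous

section Tangent

variable {E : Type*} [NormedAddCommGroup E] [InnerProductSpace ℝ E] {x v : E}

theorem norm_le_norm_add_of_inner_eq_zero (hxv : ⟪x, v⟫ = 0) : ‖x‖ ≤ ‖x + v‖ := by
  have hpyth := norm_add_sq_eq_norm_sq_add_norm_sq_of_inner_eq_zero x v hxv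
  nlinarith [norm_nonneg x, norm_nonneg (x + v), mul_self_nonneg ‖v‖]

theorem inner_sub_inner_smul_left_of_inner_eq_zero (hxv : ⟪x, v⟫ = 0) (ξ : E) :
    ⟪ξ - ⟪x, ξ⟫ • x, v⟫ = ⟪ξ, v⟫ := by
  rw [inner_sub_left, real_inner_smul_left, hxv, mul_zero, sub_zero]

end Tangent

theorem h_descent_inequality_general {n : ℕ} (h : EuclideanSpace ℝ (Fin n) → ℝ)
    (hconv : ConvexOn ℝ Set.univ h)
    (hhom : ∀ (α : ℝ) (x : EuclideanSpace ℝ (Fin n)), h (α • x) = |α| * h x)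
    (x v G : EuclideanSpace ℝ (Fin n)) (hx : ‖x‖ = 1) (hxv : ⟪x, v⟫ = 0)
    (t : ℝ)
    (hξ : ∃ ξ : EuclideanSpace ℝ (Fin n),
      (∀ y, h (x + v) + ⟪ξ, y - (x + v)⟫ ≤ h y) ∧
      G + (1/t) • v + (ξ - ⟪x, ξ⟫ • x) = 0) :
    h (‖x + v‖⁻¹ • (x + v)) ≤ h x + ⟪-G - (1/t) • v, v⟫ := by
  obtain ⟨ξ, hsub, hfoc⟩ := hξ
  have hnorm : 1 ≤ ‖x + v‖ := hx ▸ norm_le_norm_add_of_inner_eq_zero hxv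
  have hscale : |‖x + v‖⁻¹| ≤ 1 := by
    rw [abs_inv, abs_norm]
    exact inv_le_one_of_one_le₀ hnorm
  have hsub_x : h (x + v) ≤ h x + ⟪ξ, v⟫ := by
    have := hsub x
    rw [sub_add_cancel_left, inner_neg_right] at this
    linarith
  have hproj : ξ - ⟪x, ξ⟫ • x = -G - (1/t) • v := by
    rw [eq_neg_of_add_eq_zero_right hfoc]
    abel
  calc h (‖x + v‖⁻¹ • (x + v))
      ≤ h (x + v) :=
        apply_smul_le_of_abs_le_one hhom (nonneg_of_convexOn_of_abs_homogeneous hconv hhom) hscale _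
    _ ≤ h x + ⟪ξ, v⟫ := hsub_x
    _ = h x + ⟪-G - (1/t) • v, v⟫ := by
      rw [← hproj, inner_sub_inner_smul_left_of_inner_eq_zero hxv]

/-- Key inequality for the non-smooth part: if some subgradient `ξ` of `h` at `x + v`
satisfies the first-order condition `G + (1/t) • v + (ξ − ⟨x, ξ⟩ • x) = 0` of the
tangent-space proximal subproblem, then
`h((x+v)/‖x+v‖) ≤ h(x) + ⟨−G − (1/t) • v, v⟩`. -/
theorem h_descent_inequality {n : ℕ} (h : EuclideanSpace ℝ (Fin n) → ℝ)
    (hconv : ConvexOn ℝ Set.univ h)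
    (hhom : ∀ (α : ℝ) (x : EuclideanSpace ℝ (Fin n)), h (α • x) = |α| * h x)
    (x v G : EuclideanSpace ℝ (Fin n)) (hx : ‖x‖ = 1) (hxv : ⟪x, v⟫ = 0)
    (t : ℝ) (ht : 0 < t)
    (hξ : ∃ ξ : EuclideanSpace ℝ (Fin n),
      (∀ y, h (x + v) + ⟪ξ, y - (x + v)⟫ ≤ h y) ∧
      G + (1/t) • v + (ξ - ⟪x, ξ⟫ • x) = 0) :
    h (‖x + v‖⁻¹ • (x + v)) ≤ h x + ⟪-G - (1/t) • v, v⟫ :=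
  h_descent_inequality_general h hconv hhom x v G hx hxv t hξ
end

section
/- Let g : ℝⁿ → ℝ be any function and h : ℝⁿ → ℝ convex and absolutely homogeneous; set f = g + h. Let x ∈ ℝⁿ with ‖x‖ = 1, v ∈ ℝⁿ with ⟨x, v⟩ = 0, G ∈ ℝⁿ (the Riemannian gradient of g at x), and t > 0. Assume: (i) there exists a subgradient ξ of h at x + v (i.e. h(y) ≥ h(x+v) + ⟨ξ, y − (x+v)⟩ for all y) with G + (1/t) • v + (ξ − ⟨x, ξ⟩ • x) = 0; and (ii) the line-search criterion g((x+v)/‖x+v‖) ≤ g(x) + ⟨G, v⟩ + (1/(2t))·‖v‖² holds. Then f((x+v)/‖x+v‖) ≤ f(x) − (1/(2t))·‖v‖², i.e. the total cost decreases by at least ‖v‖²/(2t) after one proximal-gradient step on the sphere. -/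
open RealInnerProductSpace

/-- Sufficient decrease of the total cost `f = g + h` after one proximal-gradient step
on the sphere: under the first-order condition of the tangent-space subproblem and the
line-search criterion, `f(R_x(v)) ≤ f(x) − ‖v‖²/(2t)`. -/
theorem total_cost_sufficient_decrease {n : ℕ}
    (g h : EuclideanSpace ℝ (Fin n) → ℝ)
    (hconv : ConvexOn ℝ Set.univ h)
    (hhom : ∀ (α : ℝ) (x : EuclideanSpace ℝ (Fin n)), h (α • x) = |α| * h x)
    (x v G : EuclideanSpace ℝ (Fin n)) (hx : ‖x‖ = 1) (hxv : ⟪x, v⟫ = 0)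
    (t : ℝ) (ht : 0 < t)
    (hξ : ∃ ξ : EuclideanSpace ℝ (Fin n),
      (∀ y, h (x + v) + ⟪ξ, y - (x + v)⟫ ≤ h y) ∧
      G + (1/t) • v + (ξ - ⟪x, ξ⟫ • x) = 0)
    (hls : g (‖x + v‖⁻¹ • (x + v)) ≤ g x + ⟪G, v⟫ + (1/(2*t)) * ‖v‖^2) :
    g (‖x + v‖⁻¹ • (x + v)) + h (‖x + v‖⁻¹ • (x + v)) ≤
      (g x + h x) - (1/(2*t)) * ‖v‖^2 := by
  obtain ⟨ξ, hsub, hstat⟩ := hξ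
  -- h is nonnegative
  have h0 : h 0 = 0 := by
    have := hhom 0 0
    simpa using this
  have hneg : ∀ y, h (-y) = h y := by
    intro y
    have := hhom (-1) y
    simpa using this
  have hnn : ∀ y, 0 ≤ h y := by
    intro y
    have hc := hconv.2 (Set.mem_univ y) (Set.mem_univ (-y))
      (by norm_num : (0:ℝ) ≤ 1/2) (by norm_num : (0:ℝ) ≤ 1/2) (by norm_num)
    have heq : (1/2:ℝ) • y + (1/2:ℝ) • (-y) = 0 := by module
    rw [heq, h0, hneg] at hc
    simp only [smul_eq_mul] at hc
    linarith
  -- norm of x + v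
  have hnorm2 : ‖x + v‖^2 = 1 + ‖v‖^2 := by
    rw [norm_add_sq_real, hx, hxv]; ring
  have hge1 : 1 ≤ ‖x + v‖ := by
    nlinarith [norm_nonneg (x + v), sq_nonneg ‖v‖]
  have hpos : (0:ℝ) < ‖x + v‖ := lt_of_lt_of_le one_pos hge1
  -- h at the retraction
  have hR : h (‖x + v‖⁻¹ • (x + v)) ≤ h (x + v) := by
    rw [hhom, abs_of_pos (inv_pos.mpr hpos)]
    calc ‖x + v‖⁻¹ * h (x + v) ≤ 1 * h (x + v) := by
          apply mul_le_mul_of_nonneg_right _ (hnn _)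
          exact inv_le_one_of_one_le₀ hge1
      _ = h (x + v) := one_mul _
  -- subgradient inequality at y = x
  have hsx := hsub x
  have hxmv : ⟪ξ, x - (x + v)⟫ = -⟪ξ, v⟫ := by
    have : x - (x + v) = -v := by abel
    rw [this, inner_neg_right]
  rw [hxmv] at hsx
  -- stationarity dotted with v
  have hdot : ⟪G, v⟫ + (1/t) * ‖v‖^2 + ⟪ξ, v⟫ = 0 := by
    have hz := congrArg (fun w => ⟪w, v⟫) hstat
    simp only [inner_add_left, inner_sub_left, real_inner_smul_left, inner_zero_left,
      real_inner_self_eq_norm_sq, real_inner_comm x ξ] at hz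
    rw [real_inner_comm ξ x] at hz
    rw [hxv] at hz
    nlinarith [hz]
  have h1t : (0:ℝ) < 1/t := by positivity
  have key : 1/(2*t) * ‖v‖^2 - (1/t) * ‖v‖^2 = -(1/(2*t)) * ‖v‖^2 := by
    field_simp; ring
  linarith [hR, hsx, hls, hdot]
end

section
/- Let A be a real symmetric positive semidefinite n×n matrix, and define g(x) = ⟨x, A x⟩ (the quadratic form of A). Let x ∈ ℝⁿ with ‖x‖ = 1 and v ∈ ℝⁿ with ⟨x, v⟩ = 0. Then g((x+v)/‖x+v‖) ≤ g(x) + ⟨2·A x − 2·⟨x, A x⟩ • x, v⟩ + σ_max(A)·‖v‖², where σ_max(A) is the largest singular value of A (equivalently, the operator norm of A) and 2·A x − 2·⟨x, A x⟩ • x is the Riemannian gradient of g at x on the unit sphere. In particular the Lipschitz-type constant of the pullback of g under the retraction R_x(v) = (x+v)/‖x+v‖ is L = 2·σ_max(A). -/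
open RealInnerProductSpace

/-! By Pythagoras `‖x + v‖² = 1 + ‖v‖² ≥ 1`, so normalising `x + v` can only shrink the
nonnegative value `⟪x + v, A (x + v)⟫`. By symmetry of `A` that value is
`⟪x, A x⟫ + 2⟪A x, v⟫ + ⟪v, A v⟫`; since `v ⟂ x` the middle term is `⟪grad g(x), v⟫`, and
`⟪v, A v⟫ ≤ ‖A‖ ‖v‖²` by Cauchy–Schwarz. -/

namespace ContinuousLinearMap

variable {E : Type*} [NormedAddCommGroup E] [InnerProductSpace ℝ E]

theorem real_inner_apply_self_le (T : E →L[ℝ] E) (v : E) : ⟪v, T v⟫ ≤ ‖T‖ * ‖v‖ ^ 2 :=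
  calc ⟪v, T v⟫ ≤ ‖v‖ * ‖T v‖ := real_inner_le_norm v (T v)
    _ ≤ ‖v‖ * (‖T‖ * ‖v‖) := by gcongr; exact T.le_opNorm v
    _ = ‖T‖ * ‖v‖ ^ 2 := by ring

theorem real_inner_smul_apply_smul_self (T : E →L[ℝ] E) (c : ℝ) (w : E) :
    ⟪c • w, T (c • w)⟫ = c ^ 2 * ⟪w, T w⟫ := by
  rw [map_smul, real_inner_smul_left, real_inner_smul_right]
  ring

theorem IsPositive.real_inner_normalize_apply_le {T : E →L[ℝ] E} (hT : T.IsPositive) {w : E}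
    (hw : 1 ≤ ‖w‖) : ⟪‖w‖⁻¹ • w, T (‖w‖⁻¹ • w)⟫ ≤ ⟪w, T w⟫ := by
  rw [real_inner_smul_apply_smul_self]
  have hc : (‖w‖⁻¹) ^ 2 ≤ 1 := pow_le_one₀ (by positivity) (inv_le_one_of_one_le₀ hw)
  exact mul_le_of_le_one_left (hT.inner_nonneg_right w) hc

theorem _root_.LinearMap.IsSymmetric.real_inner_add_apply_add_self {T : E →ₗ[ℝ] E}
    (hT : T.IsSymmetric) (x v : E) :
    ⟪x + v, T (x + v)⟫ = ⟪x, T x⟫ + 2 * ⟪T x, v⟫ + ⟪v, T v⟫ := by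
  rw [map_add, inner_add_left, inner_add_right, inner_add_right, ← hT x v,
    real_inner_comm (T x) v]
  ring

theorem IsPositive.real_inner_retraction_le {T : E →L[ℝ] E} (hT : T.IsPositive) {x v : E}
    (hx : ‖x‖ = 1) (hxv : ⟪x, v⟫ = 0) :
    ⟪‖x + v‖⁻¹ • (x + v), T (‖x + v‖⁻¹ • (x + v))⟫ ≤
      ⟪x, T x⟫ + ⟪(2 : ℝ) • T x - (2 * ⟪x, T x⟫) • x, v⟫ + ‖T‖ * ‖v‖ ^ 2 := by
  have hnorm : 1 ≤ ‖x + v‖ := by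
    have := norm_add_sq_eq_norm_sq_add_norm_sq_real hxv
    rw [hx] at this
    nlinarith [norm_nonneg (x + v), sq_nonneg ‖v‖]
  have hgrad : ⟪(2 : ℝ) • T x - (2 * ⟪x, T x⟫) • x, v⟫ = 2 * ⟪T x, v⟫ := by
    rw [inner_sub_left, real_inner_smul_left, real_inner_smul_left, hxv, mul_zero, sub_zero]
  calc _ ≤ ⟪x + v, T (x + v)⟫ := hT.real_inner_normalize_apply_le hnorm
    _ = ⟪x, T x⟫ + 2 * ⟪T x, v⟫ + ⟪v, T v⟫ := hT.isSymmetric.real_inner_add_apply_add_self x v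
    _ ≤ _ := by rw [hgrad]; gcongr; exact T.real_inner_apply_self_le v

end ContinuousLinearMap

theorem Matrix.PosSemidef.isPositive_toEuclideanCLM {n : Type*} [Fintype n] [DecidableEq n]
    {A : Matrix n n ℝ} (hA : A.PosSemidef) : (Matrix.toEuclideanCLM (𝕜 := ℝ) A).IsPositive := by
  rw [← ContinuousLinearMap.isPositive_toLinearMap_iff, Matrix.coe_toEuclideanCLM_eq_toEuclideanLin]
  exact Matrix.isPositive_toEuclideanLin_iff.mpr hA

theorem rayleigh_pullback_lipschitz_bound_general {n : ℕ} (A : Matrix (Fin n) (Fin n) ℝ)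
    (hApsd : A.PosSemidef)
    (x v : EuclideanSpace ℝ (Fin n)) (hx : ‖x‖ = 1) (hxv : ⟪x, v⟫ = 0) :
    ⟪‖x + v‖⁻¹ • (x + v), (Matrix.toEuclideanCLM (𝕜 := ℝ) A) (‖x + v‖⁻¹ • (x + v))⟫ ≤
      ⟪x, (Matrix.toEuclideanCLM (𝕜 := ℝ) A) x⟫ +
        ⟪(2 : ℝ) • (Matrix.toEuclideanCLM (𝕜 := ℝ) A) x -
          (2 * ⟪x, (Matrix.toEuclideanCLM (𝕜 := ℝ) A) x⟫) • x, v⟫ +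
        ‖Matrix.toEuclideanCLM (𝕜 := ℝ) A‖ * ‖v‖^2 :=
  hApsd.isPositive_toEuclideanCLM.real_inner_retraction_le hx hxv

/-- Lipschitz-type bound for the Rayleigh quotient cost `g(x) = ⟨x, A x⟩` under the
sphere retraction: for `‖x‖ = 1` and `⟨x, v⟩ = 0`,
`g((x+v)/‖x+v‖) ≤ g(x) + ⟨grad g(x), v⟩ + σ_max(A)·‖v‖²`,
where `grad g(x) = 2Ax − 2⟨x, Ax⟩x` and `σ_max(A) = ‖A‖` is the operator norm;
i.e. the Lipschitz-type constant of the pullback is `L = 2 σ_max(A)`. -/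
theorem rayleigh_pullback_lipschitz_bound {n : ℕ} (A : Matrix (Fin n) (Fin n) ℝ)
    (hAsymm : A.IsSymm) (hApsd : A.PosSemidef)
    (x v : EuclideanSpace ℝ (Fin n)) (hx : ‖x‖ = 1) (hxv : ⟪x, v⟫ = 0) :
    ⟪‖x + v‖⁻¹ • (x + v), (Matrix.toEuclideanCLM (𝕜 := ℝ) A) (‖x + v‖⁻¹ • (x + v))⟫ ≤
      ⟪x, (Matrix.toEuclideanCLM (𝕜 := ℝ) A) x⟫ +
        ⟪(2 : ℝ) • (Matrix.toEuclideanCLM (𝕜 := ℝ) A) x -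
          (2 * ⟪x, (Matrix.toEuclideanCLM (𝕜 := ℝ) A) x⟫) • x, v⟫ +
        ‖Matrix.toEuclideanCLM (𝕜 := ℝ) A‖ * ‖v‖^2 :=
  rayleigh_pullback_lipschitz_bound_general A hApsd x v hx hxv
end

section
/- Let h : ℝⁿ → ℝ be convex and absolutely homogeneous, x ∈ ℝⁿ with ‖x‖ = 1, G ∈ ℝⁿ with ⟨x, G⟩ = 0, and t' > 0. Let z minimize y ↦ t'·h(y) + (1/2)·‖y − (x − t' • G)‖², and suppose c := ⟨x, z⟩ > 0. Set t := t'/c and v := (1/c) • z − x. Then ⟨x, v⟩ = 0, t > 0, and v solves the Riemannian proximal-gradient subproblem on the sphere: for every u ∈ ℝⁿ with ⟨x, u⟩ = 0, ⟨G, v⟩ + (1/(2t))·‖v‖² + h(x + v) ≤ ⟨G, u⟩ + (1/(2t))·‖u‖² + h(x + u). -/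
/-!
Write `c = ⟪x, z⟫`. Then `z = c • (x + v)` with `v` tangent at `x`, and for every tangent `w`,
positive homogeneity of `h` and orthogonality of `w` to `x` give
`t' h(c(x + w)) + ½‖c(x + w) − (x − t'G)‖² = c t' · (⟪G, w⟫ + ‖w‖²/(2t) + h(x + w)) + K`
with `K` independent of `w`. Comparing the proximal objective at `z` with its value at
`c(x + u)` and dividing by `c t' > 0` gives the claim.
-/

open RealInnerProductSpace

variable {E : Type*} [NormedAddCommGroup E] [InnerProductSpace ℝ E]

noncomputable def riemannianProxObjective (h : E → ℝ) (G x : E) (t : ℝ) (w : E) : ℝ :=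
  ⟪G, w⟫ + (1 / (2 * t)) * ‖w‖ ^ 2 + h (x + w)

lemma inner_inv_inner_smul_sub_self {x : E} (hx : ‖x‖ = 1) {z : E} (hz : ⟪x, z⟫ ≠ 0) :
    ⟪x, ⟪x, z⟫⁻¹ • z - x⟫ = 0 := by
  rw [inner_sub_right, real_inner_smul_right, inv_mul_cancel₀ hz, real_inner_self_eq_norm_sq,
    hx, one_pow, sub_self]

lemma norm_smul_add_sub_sq {x w : E} (hw : ⟪x, w⟫ = 0) (c s : ℝ) (G : E) :
    ‖c • (x + w) - (x - s • G)‖ ^ 2 =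
      ‖(c - 1) • x + s • G‖ ^ 2 + 2 * c * s * ⟪G, w⟫ + c ^ 2 * ‖w‖ ^ 2 := by
  have hsplit : c • (x + w) - (x - s • G) = ((c - 1) • x + s • G) + c • w := by
    rw [smul_add, sub_smul, one_smul]; abel
  rw [hsplit, norm_add_sq_real, inner_add_left, real_inner_smul_left, real_inner_smul_right,
    real_inner_smul_left, real_inner_smul_right, hw, norm_smul, mul_pow, Real.norm_eq_abs,
    sq_abs]
  ring

lemma prox_objective_smul_add {h : E → ℝ} {c t' : ℝ} (ht' : t' ≠ 0)
    (hhom : ∀ y, h (c • y) = c * h y) {x w : E} (hw : ⟪x, w⟫ = 0) (G : E) :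
    t' * h (c • (x + w)) + 1 / 2 * ‖c • (x + w) - (x - t' • G)‖ ^ 2 =
      c * t' * riemannianProxObjective h G x (t' / c) w + 1 / 2 * ‖(c - 1) • x + t' • G‖ ^ 2 := by
  rw [hhom, norm_smul_add_sub_sq hw, riemannianProxObjective]
  rcases eq_or_ne c 0 with rfl | hc
  · simp
  · field_simp
    ring

theorem proxy_stepsize_solves_subproblem_general {n : ℕ} (h : EuclideanSpace ℝ (Fin n) → ℝ)
    (hhom : ∀ (α : ℝ) (x : EuclideanSpace ℝ (Fin n)), h (α • x) = |α| * h x)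
    (x G : EuclideanSpace ℝ (Fin n)) (hx : ‖x‖ = 1)
    (t' : ℝ) (ht' : 0 < t') (z : EuclideanSpace ℝ (Fin n))
    (hz : ∀ y, t' * h z + (1/2) * ‖z - (x - t' • G)‖^2 ≤
      t' * h y + (1/2) * ‖y - (x - t' • G)‖^2)
    (hc : 0 < ⟪x, z⟫)
    (t : ℝ) (htdef : t = t' / ⟪x, z⟫)
    (v : EuclideanSpace ℝ (Fin n)) (hvdef : v = (⟪x, z⟫)⁻¹ • z - x) :
    ⟪x, v⟫ = 0 ∧ 0 < t ∧
    ∀ u : EuclideanSpace ℝ (Fin n), ⟪x, u⟫ = 0 →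
      ⟪G, v⟫ + (1/(2*t)) * ‖v‖^2 + h (x + v) ≤
        ⟪G, u⟫ + (1/(2*t)) * ‖u‖^2 + h (x + u) := by
  have hxv : ⟪x, v⟫ = 0 := hvdef ▸ inner_inv_inner_smul_sub_self hx hc.ne'
  have hzv : z = ⟪x, z⟫ • (x + v) := by
    rw [hvdef, add_sub_cancel, smul_smul, mul_inv_cancel₀ hc.ne', one_smul]
  have hhom_pos : ∀ y, h (⟪x, z⟫ • y) = ⟪x, z⟫ * h y := fun y => by
    rw [hhom, abs_of_pos hc]
  refine ⟨hxv, htdef ▸ div_pos ht' hc, fun u hxu => ?_⟩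
  have hcompare := hz (⟪x, z⟫ • (x + u))
  nth_rewrite 1 [hzv] at hcompare
  nth_rewrite 2 [hzv] at hcompare
  rw [prox_objective_smul_add ht'.ne' hhom_pos hxv, prox_objective_smul_add ht'.ne' hhom_pos hxu,
    add_le_add_iff_right, mul_le_mul_iff_right₀ (mul_pos hc ht'), ← htdef] at hcompare
  exact hcompare

/-- The proxy step-size technique solves the Riemannian proximal-gradient subproblem on
the sphere: with `z = prox_{t' h}(x − t' • G)`, `c = ⟨x, z⟩ > 0`, `t = t'/c` and
`v = (1/c) • z − x`, the vector `v` is tangent at `x`, `t > 0`, and `v` minimizes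
`u ↦ ⟨G, u⟩ + (1/(2t))‖u‖² + h(x + u)` over the tangent space `T_x S`. -/
theorem proxy_stepsize_solves_subproblem {n : ℕ} (h : EuclideanSpace ℝ (Fin n) → ℝ)
    (hconv : ConvexOn ℝ Set.univ h)
    (hhom : ∀ (α : ℝ) (x : EuclideanSpace ℝ (Fin n)), h (α • x) = |α| * h x)
    (x G : EuclideanSpace ℝ (Fin n)) (hx : ‖x‖ = 1) (hxG : ⟪x, G⟫ = 0)
    (t' : ℝ) (ht' : 0 < t') (z : EuclideanSpace ℝ (Fin n))
    (hz : ∀ y, t' * h z + (1/2) * ‖z - (x - t' • G)‖^2 ≤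
      t' * h y + (1/2) * ‖y - (x - t' • G)‖^2)
    (hc : 0 < ⟪x, z⟫)
    (t : ℝ) (htdef : t = t' / ⟪x, z⟫)
    (v : EuclideanSpace ℝ (Fin n)) (hvdef : v = (⟪x, z⟫)⁻¹ • z - x) :
    ⟪x, v⟫ = 0 ∧ 0 < t ∧
    ∀ u : EuclideanSpace ℝ (Fin n), ⟪x, u⟫ = 0 →
      ⟪G, v⟫ + (1/(2*t)) * ‖v‖^2 + h (x + v) ≤
        ⟪G, u⟫ + (1/(2*t)) * ‖u‖^2 + h (x + u) :=
  proxy_stepsize_solves_subproblem_general h hhom x G hx t' ht' z hz hc t htdef v hvdef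
end
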